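/- Let S = sgp^+⟨a, b | aba = ba⟩ with a ≠ b. Then S is not automatic. -/

import Mathlib

/-!  Common definitions, following the conventions of the paper
"Automaticity of one-relator semigroups with length less than or equal to three".

Words over an alphabet `α` are modelled as `List α`; the empty word is `[]`.
The padded alphabet `A(2,$)` is modelled inside `Option α × Option α`,
where `none` plays the role of the padding symbol `$` (the pair `(none, none)`
never occurs in a padded convolution). -/

/-- A regular set of words: one accepted by a DFA with finitely many states. -/
abbrev IsReg {α : Type*} (L : Set (List α)) : Prop :=
  Language.IsRegular (L : Language α)

/-- Right-padded convolution `(x,y)δᴿ`: align the two words letter by letter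
from the left and pad the shorter one on the right with the padding symbol. -/
def padR {α : Type*} (x y : List α) : List (Option α × Option α) :=
  (x.map some ++ List.replicate (y.length - x.length) none).zip
    (y.map some ++ List.replicate (x.length - y.length) none)

/-- Left-padded convolution `(x,y)δᴸ`: align the two words letter by letter
from the right and pad the shorter one on the left with the padding symbol. -/
def padL {α : Type*} (x y : List α) : List (Option α × Option α) :=
  (List.replicate (y.length - x.length) none ++ x.map some).zip
    (List.replicate (x.length - y.length) none ++ y.map some)

/-- One elementary rewriting step: replace a factor `u` by `v`
for some defining relation `(u, v) ∈ R` (in either direction via `Relation.EqvGen`). -/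
def OneStep {α : Type*} (R : Set (List α × List α)) (x y : List α) : Prop :=
  ∃ p u v s, (u, v) ∈ R ∧ x = p ++ u ++ s ∧ y = p ++ v ++ s

/-- Equality of two words in the semigroup `sgp⁺⟨α ∣ R⟩` (resp. the monoid
`sgp⟨α ∣ R⟩`): the congruence on words generated by the relations `R`. -/
def WordEq {α : Type*} (R : Set (List α × List α)) : List α → List α → Prop :=
  Relation.EqvGen (OneStep R)

/-- Expansion of a word over an abstract generating set `β` into a word over the
presentation alphabet `α`, where `g b` is a word representing the generator `b`. -/
def expandW {α β : Type*} (g : β → List α) (w : List β) : List α :=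
  (w.map g).flatten

/-- `(g, L)` is an automatic structure for the semigroup `sgp⁺⟨α ∣ R⟩` with
respect to the finite generating set indexed by `β`:  each generator `b` is the
element of the semigroup represented by the nonempty word `g b`, the language
`L ⊆ β⁺` is regular and maps onto the semigroup, and `L_ε^$` together with all
`L_b^$` (right multiplication, right padding) are regular. -/
structure SgpAutoStruct {α β : Type*} (R : Set (List α × List α))
    (g : β → List α) (L : Set (List β)) : Prop where
  gen_ne : ∀ b, g b ≠ []
  reg : IsReg L
  ne : ∀ w ∈ L, w ≠ []
  onto : ∀ w : List α, w ≠ [] → ∃ x ∈ L, WordEq R (expandW g x) w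
  eq_reg : IsReg {p | ∃ x ∈ L, ∃ y ∈ L,
      WordEq R (expandW g x) (expandW g y) ∧ p = padR x y}
  mul_reg : ∀ b : β, IsReg {p | ∃ x ∈ L, ∃ y ∈ L,
      WordEq R (expandW g x ++ g b) (expandW g y) ∧ p = padR x y}

/-- A prefix-automatic structure for `sgp⁺⟨α ∣ R⟩`: an automatic structure for
which moreover `L'_= = {(x,y)δᴿ : x ∈ L, y ∈ Pref(L), x = y in S}` is regular. -/
structure SgpPrefixAutoStruct {α β : Type*} (R : Set (List α × List α))
    (g : β → List α) (L : Set (List β)) extends SgpAutoStruct R g L : Prop where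
  pre_reg : IsReg {p | ∃ x ∈ L, ∃ y : List β, (∃ z ∈ L, y <+: z) ∧
      WordEq R (expandW g x) (expandW g y) ∧ p = padR x y}

/-- A biautomatic structure for the semigroup `sgp⁺⟨α ∣ R⟩`: the languages
`L_b^$`, `_bL^$`, `^$L_b` and `_b^$L` are regular for every `b ∈ β ∪ {ε}`. -/
structure SgpBiautoStruct {α β : Type*} (R : Set (List α × List α))
    (g : β → List α) (L : Set (List β)) : Prop where
  gen_ne : ∀ b, g b ≠ []
  reg : IsReg L
  ne : ∀ w ∈ L, w ≠ []
  onto : ∀ w : List α, w ≠ [] → ∃ x ∈ L, WordEq R (expandW g x) w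
  eqR_reg : IsReg {p | ∃ x ∈ L, ∃ y ∈ L,
      WordEq R (expandW g x) (expandW g y) ∧ p = padR x y}
  eqL_reg : IsReg {p | ∃ x ∈ L, ∃ y ∈ L,
      WordEq R (expandW g x) (expandW g y) ∧ p = padL x y}
  mulRR_reg : ∀ b : β, IsReg {p | ∃ x ∈ L, ∃ y ∈ L,
      WordEq R (expandW g x ++ g b) (expandW g y) ∧ p = padR x y}
  mulLR_reg : ∀ b : β, IsReg {p | ∃ x ∈ L, ∃ y ∈ L,
      WordEq R (g b ++ expandW g x) (expandW g y) ∧ p = padR x y}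
  mulRL_reg : ∀ b : β, IsReg {p | ∃ x ∈ L, ∃ y ∈ L,
      WordEq R (expandW g x ++ g b) (expandW g y) ∧ p = padL x y}
  mulLL_reg : ∀ b : β, IsReg {p | ∃ x ∈ L, ∃ y ∈ L,
      WordEq R (g b ++ expandW g x) (expandW g y) ∧ p = padL x y}

/-- The semigroup `sgp⁺⟨α ∣ R⟩` is automatic: it admits an automatic structure
over some finite generating set. -/
def SgpAutomatic {α : Type*} (R : Set (List α × List α)) : Prop :=
  ∃ (β : Type) (_ : Fintype β) (g : β → List α) (L : Set (List β)),
    SgpAutoStruct R g L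

/-- The semigroup `sgp⁺⟨α ∣ R⟩` is prefix-automatic. -/
def SgpPrefixAutomatic {α : Type*} (R : Set (List α × List α)) : Prop :=
  ∃ (β : Type) (_ : Fintype β) (g : β → List α) (L : Set (List β)),
    SgpPrefixAutoStruct R g L

/-- The semigroup `sgp⁺⟨α ∣ R⟩` is biautomatic. -/
def SgpBiautomatic {α : Type*} (R : Set (List α × List α)) : Prop :=
  ∃ (β : Type) (_ : Fintype β) (g : β → List α) (L : Set (List β)),
    SgpBiautoStruct R g L

/-- `(g, L)` is an automatic structure for the monoid `sgp⟨α ∣ R⟩` with respect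
to a finite generating set indexed by `β`; generators may represent any element
of the monoid (in particular the identity, represented by the empty word). -/
structure MonAutoStruct {α β : Type*} (R : Set (List α × List α))
    (g : β → List α) (L : Set (List β)) : Prop where
  reg : IsReg L
  ne : ∀ w ∈ L, w ≠ []
  onto : ∀ w : List α, ∃ x ∈ L, WordEq R (expandW g x) w
  eq_reg : IsReg {p | ∃ x ∈ L, ∃ y ∈ L,
      WordEq R (expandW g x) (expandW g y) ∧ p = padR x y}
  mul_reg : ∀ b : β, IsReg {p | ∃ x ∈ L, ∃ y ∈ L,
      WordEq R (expandW g x ++ g b) (expandW g y) ∧ p = padR x y}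

/-- A prefix-automatic structure for the monoid `sgp⟨α ∣ R⟩`. -/
structure MonPrefixAutoStruct {α β : Type*} (R : Set (List α × List α))
    (g : β → List α) (L : Set (List β)) extends MonAutoStruct R g L : Prop where
  pre_reg : IsReg {p | ∃ x ∈ L, ∃ y : List β, (∃ z ∈ L, y <+: z) ∧
      WordEq R (expandW g x) (expandW g y) ∧ p = padR x y}

/-- A biautomatic structure for the monoid `sgp⟨α ∣ R⟩`. -/
structure MonBiautoStruct {α β : Type*} (R : Set (List α × List α))
    (g : β → List α) (L : Set (List β)) : Prop where
  reg : IsReg L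
  ne : ∀ w ∈ L, w ≠ []
  onto : ∀ w : List α, ∃ x ∈ L, WordEq R (expandW g x) w
  eqR_reg : IsReg {p | ∃ x ∈ L, ∃ y ∈ L,
      WordEq R (expandW g x) (expandW g y) ∧ p = padR x y}
  eqL_reg : IsReg {p | ∃ x ∈ L, ∃ y ∈ L,
      WordEq R (expandW g x) (expandW g y) ∧ p = padL x y}
  mulRR_reg : ∀ b : β, IsReg {p | ∃ x ∈ L, ∃ y ∈ L,
      WordEq R (expandW g x ++ g b) (expandW g y) ∧ p = padR x y}
  mulLR_reg : ∀ b : β, IsReg {p | ∃ x ∈ L, ∃ y ∈ L,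
      WordEq R (g b ++ expandW g x) (expandW g y) ∧ p = padR x y}
  mulRL_reg : ∀ b : β, IsReg {p | ∃ x ∈ L, ∃ y ∈ L,
      WordEq R (expandW g x ++ g b) (expandW g y) ∧ p = padL x y}
  mulLL_reg : ∀ b : β, IsReg {p | ∃ x ∈ L, ∃ y ∈ L,
      WordEq R (g b ++ expandW g x) (expandW g y) ∧ p = padL x y}

/-- The monoid `sgp⟨α ∣ R⟩` is automatic. -/
def MonAutomatic {α : Type*} (R : Set (List α × List α)) : Prop :=
  ∃ (β : Type) (_ : Fintype β) (g : β → List α) (L : Set (List β)),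
    MonAutoStruct R g L

/-- The monoid `sgp⟨α ∣ R⟩` is prefix-automatic. -/
def MonPrefixAutomatic {α : Type*} (R : Set (List α × List α)) : Prop :=
  ∃ (β : Type) (_ : Fintype β) (g : β → List α) (L : Set (List β)),
    MonPrefixAutoStruct R g L

/-- The monoid `sgp⟨α ∣ R⟩` is biautomatic. -/
def MonBiautomatic {α : Type*} (R : Set (List α × List α)) : Prop :=
  ∃ (β : Type) (_ : Fintype β) (g : β → List α) (L : Set (List β)),
    MonBiautoStruct R g L

/-- The defining relations of `S¹ = sgp⁺⟨α, e ∣ R, ea = ae = a, ee = e⟩`,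
the monoid obtained from `S = sgp⁺⟨α ∣ R⟩` by adjoining an identity element,
presented as a semigroup over the alphabet `Option α` where `none` is the new
identity letter `e`. -/
def adjoinOne {α : Type*} (R : Set (List α × List α)) :
    Set (List (Option α) × List (Option α)) :=
  {q | ∃ p ∈ R, q = (p.1.map some, p.2.map some)} ∪
    {q | ∃ a : α, q = ([none, some a], [some a])} ∪
    {q | ∃ a : α, q = ([some a, none], [some a])} ∪
    {([none, none], [none])}

/-!
The number of `b`'s is an invariant of `S`, and a word without a factor `ba` (such as `a` or
`aᵠbʳ`) is the only word representing its element, while `aᵠbʳ · a = bʳa`. Hence `a` is itself a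
generator of any automatic structure, and the padded pair `(x, y)` of the representatives of
`aᵠbʳ` and `bʳa` is accepted by the automaton for `L_a`. Weighting a padded letter by the number of
`b`'s of its second component minus that of its first, every accepted word has weight `0`, so the
weight of a prefix of an accepted word is a function of the state it reaches; as the weights of
the letters are bounded by `ℓ`, the prefix weights are then bounded by `ℓ` times the number of
states. For `q ≥ ℓ |y|` the prefix of length `|y|` has weight `r`, which is impossible for large
`r`.
-/

open List

theorem exists_mem_Ioc_of_succ_le_add {S : ℕ → ℤ} {c ℓ : ℤ} (hS : ∀ i, S (i + 1) ≤ S i + ℓ)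
    (h0 : S 0 ≤ c) : ∀ {t : ℕ}, c < S t → ∃ i, S i ∈ Set.Ioc c (c + ℓ)
  | 0, ht => absurd h0 (not_le.2 ht)
  | t + 1, ht => by
    by_cases hle : S (t + 1) ≤ c + ℓ
    · exact ⟨t + 1, ht, hle⟩
    · exact exists_mem_Ioc_of_succ_le_add hS h0 (t := t) (by linarith [hS t])

namespace DFA

variable {γ σ : Type*} (M : DFA γ σ) (δ : γ → ℤ)

theorem sum_map_eq_of_eval_eq (hzero : ∀ w ∈ M.accepts, (w.map δ).sum = 0)
    {u u' v : List γ} (hu : u ++ v ∈ M.accepts) (h : M.eval u = M.eval u') :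
    (u.map δ).sum = (u'.map δ).sum := by
  have hu' : u' ++ v ∈ M.accepts := by
    rw [mem_accepts] at hu ⊢
    rwa [eval, evalFrom_of_append, ← eval, ← h, eval, ← evalFrom_of_append]
  have h1 := hzero _ hu
  have h2 := hzero _ hu'
  simp only [map_append, sum_append] at h1 h2
  linarith

theorem sum_map_take_le [Fintype σ] {ℓ : ℕ} (hδ : ∀ c, δ c ≤ ℓ)
    (hzero : ∀ w ∈ M.accepts, (w.map δ).sum = 0) {w : List γ} (hw : w ∈ M.accepts) (t : ℕ) :
    ((w.take t).map δ).sum ≤ Fintype.card σ * ℓ := by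
  set S : ℕ → ℤ := fun i => ((w.take i).map δ).sum with hSdef
  by_contra! ht
  have hstep : ∀ i, S (i + 1) ≤ S i + ℓ := by
    intro i
    simp only [hSdef, take_add_one, map_append, sum_append, add_le_add_iff_left]
    cases w[i]? <;> simp [hδ]
  -- pigeonhole: the prefix sums visit each of the `card σ + 1` bands `(kℓ, (k+1)ℓ]`, and two
  -- visits reaching the same state must have equal sums
  have hband : ∀ k : Fin (Fintype.card σ + 1), ∃ i, S i ∈ Set.Ioc (k * ℓ : ℤ) (k * ℓ + ℓ) :=
    fun k => exists_mem_Ioc_of_succ_le_add hstep (by simp [hSdef]; positivity)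
      (ht.trans_le' (by gcongr; exact_mod_cast k.is_le))
  choose pos hpos using hband
  have hlt : ∀ k k', k < k' → S (pos k) < S (pos k') := fun k k' h =>
    calc S (pos k) ≤ k * ℓ + ℓ := (hpos k).2
      _ = (k + 1 : ℕ) * ℓ := by push_cast; ring
      _ ≤ k' * ℓ := by gcongr; exact h
      _ < S (pos k') := (hpos k').1
  obtain ⟨k, k', hkk', hstate⟩ := Fintype.exists_ne_map_eq_of_card_lt
    (fun k => M.eval (w.take (pos k))) (by simp)
  have hS : S (pos k) = S (pos k') :=
    M.sum_map_eq_of_eval_eq δ hzero (by rwa [take_append_drop]) hstate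
  rcases hkk'.lt_or_gt with h | h
  · exact (hlt _ _ h).ne hS
  · exact (hlt _ _ h).ne' hS

end DFA

namespace WordEq

variable {α : Type*} {R : Set (List α × List α)} {x y z : List α}

theorem refl (x : List α) : WordEq R x x :=
  Relation.EqvGen.refl x

theorem symm (h : WordEq R x y) : WordEq R y x :=
  Relation.EqvGen.symm _ _ h

theorem trans (h₁ : WordEq R x y) (h₂ : WordEq R y z) : WordEq R x z :=
  Relation.EqvGen.trans _ _ _ h₁ h₂

theorem of_mem {u v : List α} (h : (u, v) ∈ R) (p s : List α) :
    WordEq R (p ++ u ++ s) (p ++ v ++ s) :=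
  Relation.EqvGen.rel _ _ ⟨p, u, v, s, h, rfl, rfl⟩

theorem append_left (w : List α) (h : WordEq R x y) : WordEq R (w ++ x) (w ++ y) := by
  induction h with
  | rel x y h =>
    obtain ⟨p, u, v, s, huv, rfl, rfl⟩ := h
    simpa only [append_assoc] using of_mem huv (w ++ p) s
  | refl => exact refl _
  | symm _ _ _ ih => exact ih.symm
  | trans _ _ _ _ _ ih₁ ih₂ => exact ih₁.trans ih₂

theorem append_right (w : List α) (h : WordEq R x y) : WordEq R (x ++ w) (y ++ w) := by
  induction h with
  | rel x y h =>
    obtain ⟨p, u, v, s, huv, rfl, rfl⟩ := h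
    simpa only [append_assoc] using of_mem huv p (s ++ w)
  | refl => exact refl _
  | symm _ _ _ ih => exact ih.symm
  | trans _ _ _ _ _ ih₁ ih₂ => exact ih₁.trans ih₂

theorem count_eq [BEq α] {c : α} (hR : ∀ p ∈ R, p.1.count c = p.2.count c)
    (h : WordEq R x y) : x.count c = y.count c := by
  induction h with
  | rel x y h =>
    obtain ⟨p, u, v, s, huv, rfl, rfl⟩ := h
    simp only [count_append, hR _ huv]
  | refl => rfl
  | symm _ _ _ ih => exact ih.symm
  | trans _ _ _ _ _ ih₁ ih₂ => exact ih₁.trans ih₂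

theorem eq_or_infix {f : List α} (hR : ∀ p ∈ R, f <:+: p.1 ∧ f <:+: p.2) (h : WordEq R x y) :
    x = y ∨ f <:+: x ∧ f <:+: y := by
  induction h with
  | rel x y h =>
    obtain ⟨p, u, v, s, huv, rfl, rfl⟩ := h
    exact .inr ⟨(hR _ huv).1.trans (infix_append p u s), (hR _ huv).2.trans (infix_append p v s)⟩
  | refl => exact .inl rfl
  | symm _ _ _ ih => exact ih.imp Eq.symm And.symm
  | trans _ _ _ _ _ ih₁ ih₂ =>
    rcases ih₁ with rfl | ⟨h₁, h₂⟩ <;> rcases ih₂ with rfl | ⟨h₃, h₄⟩ <;> tauto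

theorem eq_of_not_infix {f : List α} (hR : ∀ p ∈ R, f <:+: p.1 ∧ f <:+: p.2)
    (h : WordEq R x y) (hx : ¬ f <:+: x) : x = y :=
  (eq_or_infix hR h).resolve_right fun h' => hx h'.1

instance : Trans (WordEq R) (WordEq R) (WordEq R) := ⟨trans⟩

end WordEq

section Padding

variable {β : Type*}

theorem take_padR (x y : List β) (n : ℕ) : (padR x y).take n = padR (x.take n) (y.take n) := by
  have key : ∀ (z : List β) (k : ℕ), (z.map some ++ replicate k none).take n
      = (z.take n).map some ++ replicate (min (n - z.length) k) none := by
    intro z k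
    rw [take_append, map_take, take_replicate, length_map]
  rw [padR, padR, zip_eq_zipWith, zip_eq_zipWith, take_zipWith, key, key]
  simp only [length_take]
  congr 4 <;> omega

theorem sum_map_padR {f : Option β → ℤ} (hf : f none = 0) (x y : List β) :
    ((padR x y).map fun p => f p.2 - f p.1).sum
      = (y.map (f ∘ some)).sum - (x.map (f ∘ some)).sum := by
  have hpad : ∀ (z : List β) (k : ℕ), ((z.map some ++ replicate k none).map f).sum
      = (z.map (f ∘ some)).sum := by
    intro z k
    simp [hf]
  have hsub := Multiset.sum_map_sub (m := Multiset.ofList (padR x y))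
    (f := fun p : Option β × Option β => f p.2) (g := fun p => f p.1)
  simp only [Multiset.map_coe, Multiset.sum_coe] at hsub
  rw [hsub]
  change ((padR x y).map (f ∘ Prod.snd)).sum - ((padR x y).map (f ∘ Prod.fst)).sum = _
  rw [← map_map, ← map_map, padR, map_snd_zip (by simp; omega), map_fst_zip (by simp; omega),
    hpad, hpad]

end Padding

theorem exists_sum_take_le_of_isReg {β : Type*} {K : Set (List (Option β × Option β))}
    (hK : IsReg K) (wt : β → ℕ) {ℓ : ℕ} (hwt : ∀ c, wt c ≤ ℓ)
    (hpad : ∀ w ∈ K, ∃ x y, w = padR x y ∧ (x.map wt).sum = (y.map wt).sum) :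
    ∃ C : ℕ, ∀ x y, padR x y ∈ K → ∀ n,
      ((y.take n).map wt).sum ≤ ((x.take n).map wt).sum + C := by
  obtain ⟨σ, _, M, hM⟩ := hK
  let f : Option β → ℤ := fun o => o.elim 0 fun c => wt c
  have hsum : ∀ x y, ((padR x y).map fun p => f p.2 - f p.1).sum
      = (y.map wt).sum - (x.map wt).sum := by
    intro x y
    rw [sum_map_padR rfl]
    simp [f, Nat.cast_list_sum, Function.comp_def]
  have hf : ∀ o, 0 ≤ f o ∧ f o ≤ ℓ := by
    rintro (_ | c) <;> simp [f, hwt]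
  have hδ : ∀ p : Option β × Option β, f p.2 - f p.1 ≤ ℓ := fun p => by
    linarith [hf p.1, hf p.2]
  have hzero : ∀ w ∈ M.accepts, (w.map fun p => f p.2 - f p.1).sum = 0 := by
    intro w hw
    rw [hM] at hw
    obtain ⟨x, y, rfl, hxy⟩ := hpad w hw
    rw [hsum, hxy, sub_self]
  refine ⟨Fintype.card σ * ℓ, fun x y hxy n => ?_⟩
  have hle := M.sum_map_take_le _ hδ hzero (by rw [hM]; exact hxy) n
  rw [take_padR, hsum] at hle
  omega

section Expand

variable {α β : Type*} {g : β → List α}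

theorem expandW_append (x y : List β) : expandW g (x ++ y) = expandW g x ++ expandW g y := by
  simp [expandW]

theorem count_expandW [BEq α] (a : α) (x : List β) :
    (expandW g x).count a = (x.map fun c => (g c).count a).sum := by
  simp [expandW, count_flatten, Function.comp_def]

theorem length_expandW_le {ℓ : ℕ} (hg : ∀ c, (g c).length ≤ ℓ) (x : List β) :
    (expandW g x).length ≤ ℓ * x.length := by
  rw [expandW, length_flatten, map_map, mul_comm, ← smul_eq_mul, ← length_map (f := length ∘ g)]
  exact sum_le_card_nsmul _ _ (by simpa using fun c _ => hg c)

theorem exists_expandW_take_eq_replicate {ℓ : ℕ} (hg : ∀ c, (g c).length ≤ ℓ) {x : List β}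
    {n : ℕ} {a : α} {l : List α} (h : expandW g x = replicate (ℓ * n) a ++ l) :
    ∃ k, expandW g (x.take n) = replicate k a := by
  have hpre : expandW g (x.take n) <+: replicate (ℓ * n) a ++ l :=
    h ▸ ⟨expandW g (x.drop n), by rw [← expandW_append, take_append_drop]⟩
  have hlen : (expandW g (x.take n)).length ≤ ℓ * n :=
    (length_expandW_le hg _).trans (Nat.mul_le_mul_left _ (length_take_le _ _))
  exact ⟨_, (prefix_iff_eq_take.1 hpre).trans
    ((take_append_of_le_length (by simpa using hlen)).trans take_replicate)⟩

end Expand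

theorem SgpAutoStruct.exists_gen_eq_singleton {α β : Type*} {R : Set (List α × List α)}
    {g : β → List α} {L : Set (List β)} (hS : SgpAutoStruct R g L) (a : α)
    (ha : ∀ w, WordEq R w [a] → w = [a]) : ∃ c, g c = [a] := by
  obtain ⟨_ | ⟨c, x⟩, -, hx⟩ := hS.onto [a] (cons_ne_nil a [])
  · exact absurd (ha _ hx) (by simp [expandW])
  · have h := ha _ hx
    rw [← singleton_append, expandW_append, append_eq_singleton_iff] at h
    rcases h with ⟨h, -⟩ | ⟨h, -⟩
    · exact absurd (by simpa [expandW] using h) (hS.gen_ne c)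
    · exact ⟨c, by simpa [expandW] using h⟩

section AbaRel

variable {α : Type*} {a b : α}

variable (a b) in
def abaRel : Set (List α × List α) := {([a, b, a], [b, a])}

theorem count_eq_of_wordEq_abaRel [DecidableEq α] (hab : a ≠ b) {x y : List α}
    (h : WordEq (abaRel a b) x y) : x.count b = y.count b :=
  h.count_eq (by simp [abaRel, hab])

theorem eq_of_wordEq_abaRel {x y : List α} (h : WordEq (abaRel a b) x y)
    (hx : ¬ [b, a] <:+: x) : x = y :=
  h.eq_of_not_infix (by simp [abaRel, infix_cons_iff]) hx

theorem not_infix_replicate_append_replicate (hab : a ≠ b) (q r : ℕ) :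
    ¬ [b, a] <:+: replicate q a ++ replicate r b := by
  induction q with
  | zero => simpa using fun h => hab (eq_of_mem_replicate (h.subset (by simp)))
  | succ q ih =>
    rw [replicate_succ, cons_append, infix_cons_iff, not_or]
    exact ⟨fun ⟨_, h⟩ => hab (cons_eq_cons.1 h).1.symm, ih⟩

theorem wordEq_abaRel_cons_replicate (r : ℕ) :
    WordEq (abaRel a b) (a :: (replicate (r + 1) b ++ [a])) (replicate (r + 1) b ++ [a]) := by
  induction r with
  | zero => simpa using WordEq.of_mem (R := abaRel a b) rfl [] []
  | succ r ih =>
    calc WordEq (abaRel a b) (a :: (replicate (r + 2) b ++ [a]))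
          (a :: replicate (r + 1) b ++ [a, b, a]) := by
          simpa [replicate_succ'] using (WordEq.of_mem (R := abaRel a b) rfl
            (a :: replicate (r + 1) b) []).symm
      WordEq (abaRel a b) _ (replicate (r + 1) b ++ [a] ++ [b, a]) := by
          simpa using ih.append_right [b, a]
      WordEq (abaRel a b) _ (replicate (r + 2) b ++ [a]) := by
          simpa [replicate_succ'] using
            WordEq.of_mem (R := abaRel a b) rfl (replicate (r + 1) b) []

theorem wordEq_abaRel_replicate_append (q r : ℕ) :
    WordEq (abaRel a b) (replicate q a ++ replicate (r + 1) b ++ [a])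
      (replicate (r + 1) b ++ [a]) := by
  induction q with
  | zero => simpa using WordEq.refl _
  | succ q ih =>
    simpa [replicate_succ] using (ih.append_left [a]).trans (wordEq_abaRel_cons_replicate r)

end AbaRel

theorem statement_16_general {α : Type} (a b : α) (hab : a ≠ b)
    (R : Set (List α × List α)) (hRdef : R = {([a, b, a], [b, a])}) :
    ¬ SgpAutomatic R := by
  classical
  subst hRdef
  change ¬ SgpAutomatic (abaRel a b)
  rintro ⟨β, _, g, L, hS⟩
  obtain ⟨c, hc⟩ := hS.exists_gen_eq_singleton a fun w hw =>
    (eq_of_wordEq_abaRel hw.symm fun h => by simpa using h.length_le).symm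
  set ℓ := Finset.univ.sup fun c => (g c).length
  have hgℓ : ∀ c, (g c).length ≤ ℓ := fun c => Finset.le_sup (f := fun c => (g c).length) (by simp)
  have hwt : ∀ x, (x.map fun c => (g c).count b).sum = (expandW g x).count b :=
    fun x => (count_expandW b x).symm
  obtain ⟨C, hC⟩ := exists_sum_take_le_of_isReg (hS.mul_reg c) (fun c => (g c).count b)
      (fun c => count_le_length.trans (hgℓ c)) <| by
    rintro _ ⟨x, -, y, -, hxy, rfl⟩
    have hcount := count_eq_of_wordEq_abaRel hab hxy
    rw [count_append, hc] at hcount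
    exact ⟨x, y, rfl, by simpa [hwt, hab] using hcount⟩
  obtain ⟨y, hyL, hy⟩ := hS.onto (replicate (C + 1) b ++ [a]) (by simp)
  obtain ⟨x, hxL, hx⟩ := hS.onto (replicate (ℓ * y.length) a ++ replicate (C + 1) b) (by simp)
  have hxe := eq_of_wordEq_abaRel hx.symm (not_infix_replicate_append_replicate hab _ _)
  have hxy : WordEq (abaRel a b) (expandW g x ++ g c) (expandW g y) := by
    rw [← hxe, hc]
    exact (wordEq_abaRel_replicate_append _ _).trans hy.symm
  obtain ⟨k, hk⟩ := exists_expandW_take_eq_replicate hgℓ hxe.symm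
  have hprefix := hC x y ⟨x, hxL, y, hyL, hxy, rfl⟩ y.length
  rw [take_length, hwt, hwt, hk, count_eq_of_wordEq_abaRel hab hy] at hprefix
  simp [hab, hab.symm] at hprefix

/-- the semigroup `S = sgp⁺⟨a, b ∣ aba = ba⟩` is not
automatic. -/
theorem statement_16 {α : Type} [Fintype α] (a b : α) (hab : a ≠ b)
    (hA : ∀ x : α, x = a ∨ x = b)
    (R : Set (List α × List α)) (hRdef : R = {([a, b, a], [b, a])}) :
    ¬ SgpAutomatic R :=
  statement_16_general a b hab R hRdef
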